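/- Regard the Landau–Streater map Φ as a linear endomorphism of the d²-dimensional complex vector space M_d(ℂ). Then the eigenvalues of Φ are exactly the numbers λ_L = 1 − L(L+1)/(2j(j+1)) for L = 0, 1, …, n (these numbers are pairwise distinct), and for each such L the eigenspace of Φ corresponding to λ_L has complex dimension 2L+1 (so that in particular Σ_{L=0}^{n}(2L+1) = d² and Φ is diagonalizable). In particular λ_n = −j/(j+1) < 0 is an eigenvalue of Φ. -/

import Mathlib

open Matrix Complex

noncomputable section

/-- Spin-z matrix for spin j = n/2 in dimension d = n+1: diagonal with entries j - k. -/
def Jz (n : ℕ) : Matrix (Fin (n+1)) (Fin (n+1)) ℂ :=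
  Matrix.diagonal fun k => (n : ℂ) / 2 - (k : ℕ)

/-- Raising operator `J₊`, with entries `(J₊)_{k,k+1} = √((k+1)(n-k))`. -/
def Jp (n : ℕ) : Matrix (Fin (n+1)) (Fin (n+1)) ℂ :=
  Matrix.of fun a b =>
    if (a : ℕ) + 1 = (b : ℕ) then ((Real.sqrt (((a : ℕ) + 1) * (n - (a : ℕ))) : ℝ) : ℂ) else 0

/-- Lowering operator `J₋ = (J₊)†`. -/
def Jm (n : ℕ) : Matrix (Fin (n+1)) (Fin (n+1)) ℂ := (Jp n)ᴴ

/-- `J_x = (J₊ + J₋)/2`. -/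
def Jx (n : ℕ) : Matrix (Fin (n+1)) (Fin (n+1)) ℂ := (1/2 : ℂ) • (Jp n + Jm n)

/-- `J_y = (J₊ - J₋)/(2i)`. -/
def Jy (n : ℕ) : Matrix (Fin (n+1)) (Fin (n+1)) ℂ := (1/(2 * Complex.I)) • (Jp n - Jm n)

/-- The Landau–Streater map `Φ(X) = (JₓXJₓ + J_yXJ_y + J_zXJ_z)/(j(j+1))`. -/
def LS (n : ℕ) (X : Matrix (Fin (n+1)) (Fin (n+1)) ℂ) : Matrix (Fin (n+1)) (Fin (n+1)) ℂ :=
  (((n : ℂ)/2) * ((n : ℂ)/2 + 1))⁻¹ • (Jx n * X * Jx n + Jy n * X * Jy n + Jz n * X * Jz n)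

end


/-!
Since `J₊, J₋, 2J_z` form an `sl₂`-triple and `J_x² + J_y² + J_z² = j(j+1)`, one has
`Φ = 1 - C / (2j(j+1))`, where `C = Σₐ ad(Jₐ)²` is the Casimir of the adjoint action
on `M_d(ℂ)`. For `L = 0, …, n` the power `J₊^L` is a primitive vector of `ad(2J_z)`-weight
`2L`, so its string `ad(J₋)^k J₊^L`, `k = 0, …, 2L`, consists of nonzero `C`-eigenvectors with
eigenvalue `L(L+1)`. These are joint eigenvectors of `C` and `ad J_z` with pairwise distinct
pairs of eigenvalues, hence linearly independent, and there are `Σ (2L+1) = d²` of them: an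
eigenbasis of `Φ`, from which the eigenvalues and their multiplicities are read off.
-/

open LieModule LieAlgebra

attribute [local instance] LieRing.ofAssociativeRing

section EigenBasis

open Module End Submodule

variable {K V ι : Type*} [Field K] [AddCommGroup V] [Module K V] [Fintype ι] [DecidableEq ι]
  (b : Basis ι K V) {f : Module.End K V} {d : ι → K}

lemma eq_toLin_diagonal_of_basis (hf : ∀ i, f (b i) = d i • b i) : f = toLin b b (diagonal d) :=
  b.ext fun i => by simp [toLin_self, diagonal_apply, hf]

lemma eigenspace_eq_span_of_basis (hf : ∀ i, f (b i) = d i • b i) (μ : K) :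
    eigenspace f μ = span K (b '' {i | d i = μ}) := by
  ext x
  have hrepr (i : ι) : b.repr (f x) i = d i * b.repr x i := by
    rw [eq_toLin_diagonal_of_basis b hf, toLin_apply, b.repr_sum_self, mulVec_diagonal]
  rw [mem_eigenspace_iff, b.mem_span_image, ← b.repr.injective.eq_iff, Finsupp.ext_iff]
  simp only [hrepr, map_smul, Finsupp.smul_apply, smul_eq_mul, Set.subset_def, Finset.mem_coe,
    Finsupp.mem_support_iff, Set.mem_ofPred_eq, mul_eq_mul_right_iff, or_iff_not_imp_right]

lemma finrank_eigenspace_of_basis [DecidableEq K] (hf : ∀ i, f (b i) = d i • b i) (μ : K) :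
    finrank K (eigenspace f μ) = Fintype.card {i // d i = μ} := by
  rw [eigenspace_eq_span_of_basis b hf, Set.image_eq_range]
  exact finrank_span_eq_card (b.linearIndependent.comp _ Subtype.val_injective)

lemma hasEigenvalue_iff_of_basis (hf : ∀ i, f (b i) = d i • b i) (μ : K) :
    HasEigenvalue f μ ↔ ∃ i, d i = μ := by
  rw [eq_toLin_diagonal_of_basis b hf, hasEigenvalue_toLin_diagonal_iff]

lemma iSup_eigenspace_eq_top_of_basis (hf : ∀ i, f (b i) = d i • b i) :
    ⨆ μ, eigenspace f μ = ⊤ := by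
  rw [eq_toLin_diagonal_of_basis b hf, iSup_eigenspace_toLin_diagonal_eq_top]

end EigenBasis

/-- For all but finitely many `c`, the eigenvalues `α i + c * β i` of `f + c • g` are
distinct. -/
lemma linearIndependent_of_injective_eigenvalue_pair {K V ι : Type*} [Field K] [Infinite K]
    [AddCommGroup V] [Module K V] [Fintype ι] {f g : Module.End K V} {v : ι → V}
    {α β : ι → K}
    (hf : ∀ i, f.HasEigenvector (α i) (v i)) (hg : ∀ i, g (v i) = β i • v i)
    (hαβ : Function.Injective fun i => (α i, β i)) : LinearIndependent K v := by
  classical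
  obtain ⟨c, hc⟩ := Infinite.exists_notMem_finset
    (Finset.univ.image fun p : ι × ι => (α p.1 - α p.2) / (β p.2 - β p.1))
  refine (f + c • g).eigenvectors_linearIndependent' (fun i => α i + c * β i) ?_ v fun i =>
    ⟨Module.End.mem_eigenspace_iff.mpr ?_, (hf i).2⟩
  · intro i j hij
    by_cases hβ : β i = β j
    · exact hαβ (Prod.ext (by simpa [hβ] using hij) hβ)
    · refine absurd (Finset.mem_image.mpr ⟨(i, j), Finset.mem_univ _, ?_⟩) hc
      field_simp [sub_ne_zero.mpr (Ne.symm hβ)]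
      linear_combination hij
  · rw [LinearMap.add_apply, LinearMap.smul_apply, (hf i).apply_eq_smul, hg, smul_smul, add_smul]

lemma lie_pow_eq_nsmul {A : Type*} [Ring A] {a b : A} {c : ℕ} (h : ⁅a, b⁆ = c • b)
    (m : ℕ) :
    ⁅a, b ^ m⁆ = (m * c) • b ^ m := by
  induction m with
  | zero => simp [Ring.lie_def]
  | succ m ih =>
    rw [Ring.lie_def] at h ih ⊢
    calc a * b ^ (m + 1) - b ^ (m + 1) * a
        = (a * b ^ m - b ^ m * a) * b + b ^ m * (a * b - b * a) := by rw [pow_succ]; noncomm_ring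
      _ = ((m + 1) * c) • b ^ (m + 1) := by
        rw [ih, h, smul_mul_assoc, mul_smul_comm, ← pow_succ, ← add_smul, add_one_mul]

lemma lie_diagonal_apply {m R : Type*} [Fintype m] [DecidableEq m] [CommRing R] (d : m → R)
    (A : Matrix m m R) (a b : m) : ⁅diagonal d, A⁆ a b = (d a - d b) * A a b := by
  rw [Ring.lie_def, Matrix.sub_apply, diagonal_mul, mul_diagonal]
  ring

lemma sq_add_sq_add_sq_eq_of_commutator {A : Type*} [Ring A] [Algebra ℂ A] {p m z : A}
    (h : p * m - m * p = 2 • z) :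
    ((1 / 2 : ℂ) • (p + m)) ^ 2 + ((1 / (2 * I)) • (p - m)) ^ 2 + z ^ 2 =
      z ^ 2 + z + m * p := by
  have hI : (1 / (2 * I)) * (1 / (2 * I)) = -(1 / 4 : ℂ) := by
    field_simp
    rw [I_sq]
    norm_num
  have hpm : p * m = m * p + 2 • z := by rw [← h]; abel
  rw [sq, sq, smul_mul_smul_comm, smul_mul_smul_comm, hI]
  simp only [add_mul, mul_add, sub_mul, mul_sub, hpm]
  module

lemma mul_add_one_injective : Function.Injective fun L : ℕ => L * (L + 1) :=
  StrictMono.injective fun _ _ h => Nat.mul_lt_mul'' h (by omega)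

lemma sum_range_two_mul_add_one (N : ℕ) : ∑ L ∈ Finset.range N, (2 * L + 1) = N * N := by
  induction N with
  | zero => rfl
  | succ N ih => rw [Finset.sum_range_succ, ih]; ring

noncomputable def landauStreaterEigenvalue (j : ℝ) (L : ℕ) : ℝ :=
  1 - L * (L + 1) / (2 * j * (j + 1))

lemma landauStreaterEigenvalue_injective {j : ℝ} (hj : 0 < j) :
    Function.Injective (landauStreaterEigenvalue j) := by
  intro L L' h
  have hD : 2 * j * (j + 1) ≠ 0 := by positivity
  have h' : ((L * (L + 1) : ℕ) : ℝ) = ((L' * (L' + 1) : ℕ) : ℝ) := by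
    simp only [landauStreaterEigenvalue, sub_right_inj, div_left_inj' hD] at h
    push_cast
    exact h
  exact mul_add_one_injective (Nat.cast_injective h')

lemma landauStreaterEigenvalue_half_self {n : ℕ} (hn : n ≠ 0) :
    landauStreaterEigenvalue (n / 2) n = -((n / 2 : ℝ) / (n / 2 + 1)) := by
  have : (n : ℝ) ≠ 0 := by exact_mod_cast hn
  rw [landauStreaterEigenvalue]
  field_simp
  ring

namespace IsSl2Triple

variable {R L L' M : Type*} [CommRing R] [LieRing L] [LieAlgebra R L] [LieRing L']
  [LieAlgebra R L'] [AddCommGroup M] [Module R M] [LieRingModule L M] [LieModule R L M]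
  {h e f : L}

lemma map (t : IsSl2Triple h e f) (φ : L →ₗ⁅R⁆ L') (hφ : φ h ≠ 0) :
    IsSl2Triple (φ h) (φ e) (φ f) where
  h_ne_zero := hφ
  lie_e_f := by rw [← φ.map_lie, t.lie_e_f]
  lie_h_e_nsmul := by rw [← φ.map_lie, t.lie_h_e_nsmul, map_nsmul]
  lie_h_f_nsmul := by rw [← φ.map_lie, t.lie_h_f_nsmul, map_neg, map_nsmul]

lemma HasPrimitiveVectorWith.casimir_pow_toEnd_f {t : IsSl2Triple h e f} {m : M} {μ : R}
    (P : t.HasPrimitiveVectorWith m μ) (k : ℕ) :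
    ⁅h, ⁅h, (toEnd R L M f ^ k) m⁆⁆ + (2 : R) • ⁅h, (toEnd R L M f ^ k) m⁆ +
        (4 : R) • ⁅f, ⁅e, (toEnd R L M f ^ k) m⁆⁆ =
      (μ * (μ + 2)) • (toEnd R L M f ^ k) m := by
  have hfe :
      ⁅f, ⁅e, (toEnd R L M f ^ k) m⁆⁆ = (k * (μ - k + 1)) • (toEnd R L M f ^ k) m := by
    cases k with
    | zero => simp [P.lie_e]
    | succ k =>
      rw [P.lie_e_pow_succ_toEnd_f, lie_smul, P.lie_f_pow_toEnd_f]
      congr 1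
      push_cast
      ring
  rw [hfe, P.lie_h_pow_toEnd_f, lie_smul, P.lie_h_pow_toEnd_f, smul_smul, smul_smul, smul_smul,
    ← add_smul, ← add_smul]
  congr 1
  ring

end IsSl2Triple

section SpinMatrices

variable (n : ℕ)

noncomputable def raisingCoeff (k : ℕ) : ℂ := ((Real.sqrt ((k + 1) * (n - k)) : ℝ) : ℂ)

variable {n} in
lemma raisingCoeff_mul_self {k : ℕ} (hk : k ≤ n) :
    raisingCoeff n k * raisingCoeff n k = (k + 1) * (n - k) := by
  have : (k : ℝ) ≤ n := by exact_mod_cast hk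
  rw [raisingCoeff, ← ofReal_mul, Real.mul_self_sqrt (by nlinarith)]
  push_cast
  ring

lemma Jp_apply (a b : Fin (n+1)) :
    Jp n a b = if (a : ℕ) + 1 = b then raisingCoeff n a else 0 := rfl

lemma Jm_apply (a b : Fin (n+1)) :
    Jm n a b = if (b : ℕ) + 1 = a then raisingCoeff n b else 0 := by
  rw [Jm, conjTranspose_apply, Jp_apply]
  split_ifs <;> simp [raisingCoeff]

lemma Jp_mul_Jm :
    Jp n * Jm n = diagonal fun a : Fin (n+1) => ((a : ℕ) + 1 : ℂ) * (n - (a : ℕ)) := by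
  ext a b
  simp only [Matrix.mul_apply, Jp_apply, Jm_apply]
  rw [Fin.sum_univ_eq_sum_range (fun c => (if (a : ℕ) + 1 = c then raisingCoeff n a else 0) *
    (if (b : ℕ) + 1 = c then raisingCoeff n b else 0))]
  simp only [ite_mul, zero_mul, mul_ite, mul_zero, Finset.sum_ite_eq, Finset.mem_range,
    diagonal_apply, add_left_inj, Fin.val_inj]
  rcases eq_or_ne a b with rfl | hab
  · by_cases ha : (a : ℕ) < n
    · simp [ha, raisingCoeff_mul_self ha.le]
    · simp [show (a : ℕ) = n by omega]
  · simp [hab]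

lemma Jm_mul_Jp :
    Jm n * Jp n = diagonal fun a : Fin (n+1) => ((a : ℕ) : ℂ) * (n - (a : ℕ) + 1) := by
  ext a b
  simp only [Matrix.mul_apply, Jp_apply, Jm_apply]
  rw [Fin.sum_univ_eq_sum_range (fun c => (if c + 1 = (a : ℕ) then raisingCoeff n c else 0) *
    (if c + 1 = (b : ℕ) then raisingCoeff n c else 0))]
  rcases eq_or_ne a b with rfl | hab
  · obtain ⟨_ | a, ha⟩ := a
    · simp
    · have ha : a ≤ n := by omega
      simp only [Nat.add_right_cancel_iff, mul_ite, ite_mul, zero_mul, mul_zero, Finset.sum_ite_eq',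
        Finset.mem_range, Order.lt_add_one_iff, ha, ↓reduceIte, raisingCoeff_mul_self ha,
        diagonal_apply_eq, Nat.cast_add, Nat.cast_one]
      ring
  · simp only [diagonal_apply, if_neg hab]
    refine Finset.sum_eq_zero fun c _ => ?_
    split_ifs <;> simp_all [Fin.ext_iff]

lemma lie_Jz_Jp : ⁅Jz n, Jp n⁆ = Jp n := by
  ext a b
  rw [Jz, lie_diagonal_apply, Jp_apply]
  split_ifs with h
  · rw [← h]; push_cast; ring
  · rw [mul_zero]

lemma lie_Jz_Jm : ⁅Jz n, Jm n⁆ = -Jm n := by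
  ext a b
  rw [Jz, lie_diagonal_apply, neg_apply, Jm_apply]
  split_ifs with h
  · rw [← h]; push_cast; ring
  · rw [mul_zero, neg_zero]

lemma lie_Jp_Jm : ⁅Jp n, Jm n⁆ = 2 • Jz n := by
  rw [Ring.lie_def, Jp_mul_Jm, Jm_mul_Jp]
  ext a b
  simp only [Jz, Matrix.sub_apply, Matrix.smul_apply, diagonal_apply]
  split_ifs
  · rw [nsmul_eq_mul]
    push_cast
    ring
  · rw [sub_self, smul_zero]

lemma Jx_mul_self_add_Jy_mul_self_add_Jz_mul_self :
    Jx n * Jx n + Jy n * Jy n + Jz n * Jz n = ((n / 2 : ℂ) * (n / 2 + 1)) • 1 := by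
  have h := sq_add_sq_add_sq_eq_of_commutator (Ring.lie_def (Jp n) (Jm n) ▸ lie_Jp_Jm n)
  rw [← Jx, ← Jy, sq, sq, sq] at h
  rw [h, Jm_mul_Jp]
  ext a b
  simp only [Jz, Matrix.add_apply, diagonal_mul_diagonal, Matrix.smul_apply, diagonal_apply,
    Matrix.one_apply]
  split_ifs
  · rw [smul_eq_mul, mul_one]
    ring
  · rw [smul_zero, add_zero, add_zero]

variable {n}

lemma isSl2Triple (hn : n ≠ 0) : IsSl2Triple (2 • Jz n) (Jp n) (Jm n) where
  h_ne_zero h := by simpa [Jz, hn] using congrFun₂ h 0 0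
  lie_e_f := lie_Jp_Jm n
  lie_h_e_nsmul := by rw [nsmul_lie, lie_Jz_Jp]
  lie_h_f_nsmul := by rw [nsmul_lie, lie_Jz_Jm, smul_neg]

/-- On `ℂ^{n+1}` the first basis vector is a primitive vector of weight `n`, and its string under
`J₋` does not vanish before step `n + 1`. -/
lemma Jm_pow_ne_zero (hn : n ≠ 0) : Jm n ^ n ≠ 0 := by
  let φ := (toLinAlgEquiv' : Matrix (Fin (n+1)) (Fin (n+1)) ℂ ≃ₐ[ℂ] _).toAlgHom.toLieHom
  have t := (isSl2Triple hn).map φ fun h =>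
    (isSl2Triple hn).h_ne_zero (toLinAlgEquiv'.injective (h.trans (map_zero _).symm))
  have P : t.HasPrimitiveVectorWith (Pi.single 0 1 : Fin (n+1) → ℂ) (n : ℂ) := by
    refine ⟨by simp, ?_, ?_⟩
    · ext a
      rcases eq_or_ne a 0 with rfl | ha
      · simp [φ, Jz, mul_div_cancel₀]
      · simp [φ, Jz, ha]
    · ext a
      simp [φ, Jp_apply]
  intro h0
  apply P.pow_toEnd_f_ne_zero_of_eq_nat rfl le_rfl
  simp [φ, toEnd_module_end, ← map_pow, h0]

lemma Jp_pow_ne_zero (hn : n ≠ 0) {m : ℕ} (hm : m ≤ n) : Jp n ^ m ≠ 0 := by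
  intro h
  apply Jm_pow_ne_zero hn
  rw [Jm, ← conjTranspose_pow, pow_eq_zero_of_le hm h, conjTranspose_zero]

lemma hasPrimitiveVectorWith_Jp_pow (hn : n ≠ 0) {m : ℕ} (hm : m ≤ n) :
    (isSl2Triple hn).HasPrimitiveVectorWith (Jp n ^ m) (2 * m : ℂ) where
  ne_zero := Jp_pow_ne_zero hn hm
  lie_h := by
    rw [lie_pow_eq_nsmul (isSl2Triple hn).lie_h_e_nsmul, ← Nat.cast_smul_eq_nsmul ℂ]
    congr 1
    push_cast
    ring
  lie_e := by rw [Ring.lie_def, ← pow_succ, ← pow_succ', sub_self]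

end SpinMatrices

section AdjointCasimir

variable (n : ℕ)

noncomputable def adCasimir : Module.End ℂ (Matrix (Fin (n+1)) (Fin (n+1)) ℂ) :=
  ad ℂ _ (Jx n) ^ 2 + ad ℂ _ (Jy n) ^ 2 + ad ℂ _ (Jz n) ^ 2

lemma adCasimir_eq :
    adCasimir n = ad ℂ _ (Jz n) ^ 2 + ad ℂ _ (Jz n) + ad ℂ _ (Jm n) * ad ℂ _ (Jp n) := by
  have h : ad ℂ _ (Jp n) * ad ℂ _ (Jm n) - ad ℂ _ (Jm n) * ad ℂ _ (Jp n) =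
      2 • ad ℂ _ (Jz n) := by
    rw [← Ring.lie_def, ← LieHom.map_lie, lie_Jp_Jm, map_nsmul]
  rw [adCasimir, Jx, Jy, map_smul, map_smul, map_add, map_sub]
  exact sq_add_sq_add_sq_eq_of_commutator h

variable {n}

lemma LS_eq_sub_adCasimir (hn : n ≠ 0) (X : Matrix (Fin (n+1)) (Fin (n+1)) ℂ) :
    LS n X = X - (2 * ((n / 2 : ℂ) * (n / 2 + 1)))⁻¹ • adCasimir n X := by
  have hK : (n / 2 : ℂ) * (n / 2 + 1) ≠ 0 := by
    have : (n / 2 : ℂ) * (n / 2 + 1) = ((n * (n + 2) : ℕ) : ℂ) / 4 := by push_cast; ring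
    rw [this]
    exact div_ne_zero (Nat.cast_ne_zero.mpr (by positivity)) (by norm_num)
  have had (A : Matrix (Fin (n+1)) (Fin (n+1)) ℂ) :
      (ad ℂ _ A ^ 2) X = A * A * X - 2 • (A * X * A) + X * (A * A) := by
    simp only [sq, Module.End.mul_apply, ad_apply, Ring.lie_def]
    noncomm_ring
  have hC : adCasimir n X = (Jx n * Jx n + Jy n * Jy n + Jz n * Jz n) * X +
      X * (Jx n * Jx n + Jy n * Jy n + Jz n * Jz n) -
      2 • (Jx n * X * Jx n + Jy n * X * Jy n + Jz n * X * Jz n) := by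
    rw [adCasimir, LinearMap.add_apply, LinearMap.add_apply, had, had, had]
    noncomm_ring
  have hsum : Jx n * X * Jx n + Jy n * X * Jy n + Jz n * X * Jz n =
      ((n / 2 : ℂ) * (n / 2 + 1)) • X - (2 : ℂ)⁻¹ • adCasimir n X := by
    rw [hC, Jx_mul_self_add_Jy_mul_self_add_Jz_mul_self, smul_mul_assoc, one_mul, mul_smul_comm,
      mul_one]
    module
  rw [LS, hsum, smul_sub, smul_smul, inv_mul_cancel₀ hK, one_smul, smul_smul,
    ← _root_.mul_inv_rev]

end AdjointCasimir

section SphericalTensor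

variable {n : ℕ}

/-- Up to normalisation, the spherical tensor operator of rank `L` and order `L - k`. -/
noncomputable def sphericalTensor (n L k : ℕ) : Matrix (Fin (n+1)) (Fin (n+1)) ℂ :=
  (toEnd ℂ _ _ (Jm n) ^ k) (Jp n ^ L)

lemma sphericalTensor_ne_zero (hn : n ≠ 0) {L k : ℕ} (hL : L ≤ n) (hk : k ≤ 2 * L) :
    sphericalTensor n L k ≠ 0 :=
  (hasPrimitiveVectorWith_Jp_pow hn hL).pow_toEnd_f_ne_zero_of_eq_nat (by push_cast; ring) hk

lemma lie_two_nsmul_Jz_sphericalTensor (hn : n ≠ 0) {L : ℕ} (hL : L ≤ n) (k : ℕ) :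
    ⁅2 • Jz n, sphericalTensor n L k⁆ = (2 * L - 2 * k : ℂ) • sphericalTensor n L k :=
  (hasPrimitiveVectorWith_Jp_pow hn hL).lie_h_pow_toEnd_f k

lemma adCasimir_sphericalTensor (hn : n ≠ 0) {L : ℕ} (hL : L ≤ n) (k : ℕ) :
    adCasimir n (sphericalTensor n L k) = (L * (L + 1) : ℂ) • sphericalTensor n L k := by
  have h := (hasPrimitiveVectorWith_Jp_pow hn hL).casimir_pow_toEnd_f k
  simp only [nsmul_lie, lie_nsmul] at h
  apply smul_right_injective _ (show (4 : ℂ) ≠ 0 by norm_num)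
  rw [adCasimir_eq]
  simp only [LinearMap.add_apply, sq, Module.End.mul_apply, ad_apply, sphericalTensor]
  linear_combination (norm := module) h

lemma LS_sphericalTensor (hn : n ≠ 0) {L : ℕ} (hL : L ≤ n) (k : ℕ) :
    LS n (sphericalTensor n L k) =
      (landauStreaterEigenvalue (n / 2) L : ℂ) • sphericalTensor n L k := by
  rw [LS_eq_sub_adCasimir hn, adCasimir_sphericalTensor hn hL, smul_smul,
    landauStreaterEigenvalue]
  push_cast
  rw [sub_smul, one_smul]
  congr 2
  ring

abbrev SphericalIndex (n : ℕ) := Σ L : Fin (n+1), Fin (2 * (L : ℕ) + 1)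

lemma card_sphericalIndex : Fintype.card (SphericalIndex n) = (n + 1) * (n + 1) := by
  rw [Fintype.card_sigma]
  simp only [Fintype.card_fin]
  rw [Fin.sum_univ_eq_sum_range (fun L => 2 * L + 1), sum_range_two_mul_add_one]

lemma linearIndependent_sphericalTensor (hn : n ≠ 0) :
    LinearIndependent ℂ fun i : SphericalIndex n => sphericalTensor n i.1 i.2 := by
  refine linearIndependent_of_injective_eigenvalue_pair
    (f := adCasimir n) (g := toEnd ℂ _ _ (2 • Jz n))
    (α := fun i => (i.1 * (i.1 + 1) : ℂ)) (β := fun i => (2 * i.1 - 2 * i.2 : ℂ))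
    (fun i => ⟨Module.End.mem_eigenspace_iff.mpr (adCasimir_sphericalTensor hn (by omega) _),
      sphericalTensor_ne_zero hn (by omega) (by omega)⟩)
    (fun i => lie_two_nsmul_Jz_sphericalTensor hn (by omega) _) ?_
  rintro ⟨L, k⟩ ⟨L', k'⟩ h
  simp only [Prod.mk.injEq] at h
  obtain rfl : L = L' := Fin.ext <| mul_add_one_injective (by exact_mod_cast h.1)
  obtain rfl : k = k' := Fin.ext (by simpa using h.2)
  rfl

lemma card_sphericalIndex_fst_eq (L : Fin (n+1)) :
    Fintype.card {i : SphericalIndex n // i.1 = L} = 2 * L + 1 := by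
  rw [Fintype.card_congr (Equiv.sigmaSubtype L), Fintype.card_fin]

noncomputable def sphericalTensorBasis (hn : n ≠ 0) :
    Module.Basis (SphericalIndex n) ℂ (Matrix (Fin (n+1)) (Fin (n+1)) ℂ) :=
  basisOfLinearIndependentOfCardEqFinrank (linearIndependent_sphericalTensor hn)
    (by rw [card_sphericalIndex, Module.finrank_matrix]; simp)

lemma sphericalTensorBasis_apply (hn : n ≠ 0) (i : SphericalIndex n) :
    sphericalTensorBasis hn i = sphericalTensor n i.1 i.2 := by
  simp [sphericalTensorBasis]

end SphericalTensor

/-- the spectrum of the Landau–Streater map, viewed as a linear endomorphism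
`T` of `M_d(ℂ)`: the eigenvalues are exactly `λ_L = 1 - L(L+1)/(2j(j+1))` for
`L = 0, …, n`; these are pairwise distinct; the eigenspace of `λ_L` has dimension `2L+1`
(so `T` is diagonalizable, `⨆ μ, eigenspace = ⊤`); in particular
`λ_n = -j/(j+1) < 0` is an eigenvalue. -/
theorem landau_streater_spectrum (n : ℕ) (hn : 1 ≤ n) (j : ℝ) (hj : j = n / 2)
    (T : Module.End ℂ (Matrix (Fin (n+1)) (Fin (n+1)) ℂ))
    (hT : ∀ X, T X = LS n X) :
    (∀ μ : ℂ, Module.End.HasEigenvalue T μ ↔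
        ∃ L : ℕ, L ≤ n ∧ μ = ((1 - (L*(L+1) : ℝ)/(2*j*(j+1)) : ℝ) : ℂ)) ∧
      (∀ L L' : ℕ, L ≤ n → L' ≤ n →
        (1 - (L*(L+1) : ℝ)/(2*j*(j+1)) : ℝ) = (1 - (L'*(L'+1) : ℝ)/(2*j*(j+1)) : ℝ) →
          L = L') ∧
      (∀ L : ℕ, L ≤ n →
        Module.finrank ℂ
            (Module.End.eigenspace T ((1 - (L*(L+1) : ℝ)/(2*j*(j+1)) : ℝ) : ℂ)) = 2*L+1) ∧
      (⨆ μ : ℂ, Module.End.eigenspace T μ) = ⊤ ∧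
      Module.End.HasEigenvalue T ((-(j/(j+1)) : ℝ) : ℂ) ∧ (-(j/(j+1)) : ℝ) < 0 := by
  classical
  subst hj
  have hn0 : n ≠ 0 := by omega
  let b := sphericalTensorBasis hn0
  have hTb (i : SphericalIndex n) :
      T (b i) = (landauStreaterEigenvalue (n / 2) i.1 : ℂ) • b i := by
    rw [hT, sphericalTensorBasis_apply, LS_sphericalTensor hn0 (Nat.lt_succ_iff.mp i.1.2)]
  have hinj := landauStreaterEigenvalue_injective (j := n / 2) (half_pos (by exact_mod_cast hn))
  have hspec (μ : ℂ) :
      T.HasEigenvalue μ ↔ ∃ L ≤ n, μ = landauStreaterEigenvalue (n / 2) L := by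
    rw [hasEigenvalue_iff_of_basis b hTb]
    constructor
    · rintro ⟨i, rfl⟩
      exact ⟨i.1, by omega, rfl⟩
    · rintro ⟨L, hL, rfl⟩
      exact ⟨⟨⟨L, by omega⟩, 0⟩, rfl⟩
  refine ⟨hspec, fun L L' _ _ h => hinj h, fun L hL => ?_, iSup_eigenspace_eq_top_of_basis b hTb,
    (hspec _).mpr ⟨n, le_rfl, by rw [landauStreaterEigenvalue_half_self hn0]⟩,
    neg_neg_of_pos (by positivity)⟩
  rw [finrank_eigenspace_of_basis b hTb, ← card_sphericalIndex_fst_eq (n := n) ⟨L, by omega⟩]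
  exact Fintype.card_congr <| Equiv.subtypeEquivRight fun _ =>
    ofReal_inj.trans (hinj.eq_iff.trans (Fin.ext_iff (b := ⟨L, by omega⟩)).symm)
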